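/- arXiv:2604.02303 — 2 statements merged into one kernel-verified Lean document; each statement's English description precedes it below -/
import Mathlib

section
/- A pre-principal collection of subcubes of 𝔹^n is the collection of principal trapspaces of some commutative Boolean network of dimension n if and only if it is convex (meaning: for all Q, R in the collection and every subcube S with Q ⊆ S ⊆ R, S also belongs to the collection). -/
/-!  Common definitions: Boolean networks on `Fin n → Bool`. -/

/-- The update `f^{(S)}` of the coordinates in `S` according to `f`. -/
def upd {n : ℕ} (f : (Fin n → Bool) → Fin n → Bool) (S : Finset (Fin n)) :
    (Fin n → Bool) → Fin n → Bool :=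
  fun x i => if i ∈ S then f x i else x i

/-- `f^{(S,T)} = f^{(T)} ∘ f^{(S)}`. -/
def upd2 {n : ℕ} (f : (Fin n → Bool) → Fin n → Bool) (S T : Finset (Fin n)) :
    (Fin n → Bool) → Fin n → Bool :=
  upd f T ∘ upd f S

/-- `Δ(x,y)`, the set of coordinates where `x` and `y` differ. -/
def delta {n : ℕ} (x y : Fin n → Bool) : Set (Fin n) := {i | x i ≠ y i}

/-- Hamming distance. -/
noncomputable def hdist {n : ℕ} (x y : Fin n → Bool) : ℕ := (delta x y).ncard

/-- The interval (subcube) `[x,y]`. -/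
def interval {n : ℕ} (x y : Fin n → Bool) : Set (Fin n → Bool) :=
  {z | delta x z ⊆ delta x y}

/-- A subcube of `𝔹^n`: fix the coordinates in `S` to `0` and those in `T` to `1`. -/
def IsSubcube {n : ℕ} (X : Set (Fin n → Bool)) : Prop :=
  ∃ S T : Set (Fin n), Disjoint S T ∧
    X = {x | (∀ i ∈ S, x i = false) ∧ (∀ i ∈ T, x i = true)}

/-- The partial order `f ⊑ g` on Boolean networks. -/
def BNle {n : ℕ} (f g : (Fin n → Bool) → Fin n → Bool) : Prop :=
  ∀ x, delta x (f x) ⊆ delta x (g x)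

/-- A trapspace of `f`: an invariant subcube. -/
def IsTrapspace {n : ℕ} (f : (Fin n → Bool) → Fin n → Bool)
    (X : Set (Fin n → Bool)) : Prop :=
  IsSubcube X ∧ ∀ x ∈ X, f x ∈ X

/-- The collection of all trapspaces of `f`. -/
def trapspaces {n : ℕ} (f : (Fin n → Bool) → Fin n → Bool) :
    Set (Set (Fin n → Bool)) :=
  {X | IsTrapspace f X}

/-- The principal trapspace `T_f(x)`: the smallest trapspace of `f` containing `x`. -/
def Tprin {n : ℕ} (f : (Fin n → Bool) → Fin n → Bool) (x : Fin n → Bool) :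
    Set (Fin n → Bool) :=
  ⋂₀ {X | IsTrapspace f X ∧ x ∈ X}

/-- The collection of principal trapspaces of `f`. -/
def PT {n : ℕ} (f : (Fin n → Bool) → Fin n → Bool) : Set (Set (Fin n → Bool)) :=
  {X | ∃ x, X = Tprin f x}

-- The opposite of `x` in a subcube `X` containing `x`: the coordinate `i` is flipped
-- iff some element of `X` differs from `x` there; so `[x, opp X x] = X` when `X` is a
-- subcube containing `x`.
open scoped Classical in
noncomputable def opp {n : ℕ} (X : Set (Fin n → Bool)) (x : Fin n → Bool) :
    Fin n → Bool :=
  fun i => if ∃ y ∈ X, y i ≠ x i then !(x i) else x i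

/-- The trapping closure `f^T`, characterised by `[x, f^T(x)] = T_f(x)`. -/
noncomputable def trapClosure {n : ℕ} (f : (Fin n → Bool) → Fin n → Bool) :
    (Fin n → Bool) → Fin n → Bool :=
  fun x => opp (Tprin f x) x

/-- The general asynchronous graph of `f`, as a relation on `𝔹^n`. -/
def GA {n : ℕ} (f : (Fin n → Bool) → Fin n → Bool) :
    (Fin n → Bool) → (Fin n → Bool) → Prop :=
  fun x y => ∃ S : Finset (Fin n), y = upd f S x

/-- The asynchronous graph of `f`, as a relation on `𝔹^n`. -/
def Agraph {n : ℕ} (f : (Fin n → Bool) → Fin n → Bool) :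
    (Fin n → Bool) → (Fin n → Bool) → Prop :=
  fun x y => ∃ i : Fin n, y = upd f {i} x

/-- The trapping graph of `f`: an edge `(x,y)` iff `y ∈ T_f(x)`. -/
def TG {n : ℕ} (f : (Fin n → Bool) → Fin n → Bool) :
    (Fin n → Bool) → (Fin n → Bool) → Prop :=
  fun x y => y ∈ Tprin f x

/-- A network is trapping if its general asynchronous graph is transitive. -/
def IsTrapping {n : ℕ} (f : (Fin n → Bool) → Fin n → Bool) : Prop :=
  Transitive (GA f)

/-- A commutative Boolean network: `f^{(i,j)} = f^{(j,i)}` for all `i,j`. -/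
def IsCommutative' {n : ℕ} (f : (Fin n → Bool) → Fin n → Bool) : Prop :=
  ∀ i j : Fin n, upd2 f {i} {j} = upd2 f {j} {i}

/-- `𝒜(x)`: the intersection of all members of `𝒜` containing `x`
(`= 𝔹^n` if no member contains `x`, since `⋂₀ ∅ = univ`). -/
def collAt {n : ℕ} (𝒜 : Set (Set (Fin n → Bool))) (x : Fin n → Bool) :
    Set (Fin n → Bool) :=
  ⋂₀ {A ∈ 𝒜 | x ∈ A}

/-- The network `F(𝒜)`, characterised by `[x, F(𝒜)(x)] = 𝒜(x)`. -/
noncomputable def Fnet {n : ℕ} (𝒜 : Set (Set (Fin n → Bool))) :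
    (Fin n → Bool) → Fin n → Bool :=
  fun x => opp (collAt 𝒜 x) x

/-- A collection of subcubes is pre-principal if `𝒬 = {𝒬(x) : x ∈ 𝔹^n}`. -/
def PrePrincipal {n : ℕ} (𝒬 : Set (Set (Fin n → Bool))) : Prop :=
  𝒬 = {X | ∃ x, X = collAt 𝒬 x}

/-- `λ(𝒜)`: unions of subcollections of `𝒜` that are subcubes. -/
def lamColl {n : ℕ} (𝒜 : Set (Set (Fin n → Bool))) : Set (Set (Fin n → Bool)) :=
  {X | ∃ ℛ ⊆ 𝒜, X = ⋃₀ ℛ ∧ IsSubcube X}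

/-- `μ(𝒜) = {𝒜(x) : x ∈ 𝔹^n}`. -/
def muColl {n : ℕ} (𝒜 : Set (Set (Fin n → Bool))) : Set (Set (Fin n → Bool)) :=
  {X | ∃ x, X = collAt 𝒜 x}

/-- A pre-ideal collection of subcubes. -/
def PreIdeal {n : ℕ} (𝒥 : Set (Set (Fin n → Bool))) : Prop :=
  Set.univ ∈ 𝒥 ∧
  (∀ A ∈ 𝒥, ∀ B ∈ 𝒥, (A ∩ B).Nonempty → A ∩ B ∈ 𝒥) ∧
  (∀ ℛ ⊆ 𝒥, IsSubcube (⋃₀ ℛ) → ⋃₀ ℛ ∈ 𝒥)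

/-- The collection of minimal trapspaces of `f`. -/
def MT {n : ℕ} (f : (Fin n → Bool) → Fin n → Bool) : Set (Set (Fin n → Bool)) :=
  {X | IsTrapspace f X ∧ ∀ Y, IsTrapspace f Y → ¬ Y ⊂ X}

/-- `M(f)`: the union of the minimal trapspaces of `f`. -/
def Mset {n : ℕ} (f : (Fin n → Bool) → Fin n → Bool) : Set (Fin n → Bool) :=
  ⋃₀ MT f

-- The min-trapping extension `f^M`: `[x, f^M(x)] = T_f(x)` if `x ∈ M(f)`,
-- and `f^M(x) = ¬x` otherwise.
open scoped Classical in
noncomputable def minExt {n : ℕ} (f : (Fin n → Bool) → Fin n → Bool) :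
    (Fin n → Bool) → Fin n → Bool :=
  fun x => if x ∈ Mset f then opp (Tprin f x) x else fun i => !(x i)

/-!
For a commutative network, updating coordinate `i` leaves every `f j` with `j ≠ i` unchanged.
Hence on `[q, f q]` each `f i` depends only on the `i`-th coordinate, `[q, f q]` is a trapspace,
and `T_f(x) = [x, f x]` for every `x`. If `T_f(p) ⊆ S ⊆ T_f(q)`, the point that agrees with `q` on
the free coordinates of `S` and with `p` elsewhere is unstable exactly on those coordinates, so its
principal trapspace is `S`.

Conversely, `F(𝒬)` satisfies `[x, F(𝒬) x] = 𝒬(x)`. If `y` is `x` updated at `i`, convexity applied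
to `𝒬(y) ⊆ B ⊆ 𝒬(x)`, where `B` frees coordinate `i` in addition to those of `𝒬(y)`, shows that
`𝒬(y)` keeps every free coordinate `j ≠ i` of `𝒬(x)`; this is commutativity of `F(𝒬)`, after which
its principal trapspaces are the `𝒬(x)`, that is, `𝒬`.
-/

open Function

section

variable {n : ℕ}

lemma Bool.eq_of_ne_of_ne : ∀ {a b c : Bool}, a ≠ c → b ≠ c → a = b := by decide

lemma Bool.eq_of_ne_iff_ne : ∀ {a b c : Bool}, (c ≠ a ↔ c ≠ b) → a = b := by decide

lemma delta_comm (x y : Fin n → Bool) : delta x y = delta y x := by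
  ext; exact ne_comm

lemma delta_subset_union (x y z : Fin n → Bool) : delta x z ⊆ delta x y ∪ delta y z :=
  fun i hxz => by_contra fun h => hxz (by simp_all [delta])

lemma delta_opp {X : Set (Fin n → Bool)} {x : Fin n → Bool} {i : Fin n} :
    i ∈ delta x (opp X x) ↔ ∃ y ∈ X, y i ≠ x i := by
  change x i ≠ opp X x i ↔ _
  rw [opp]
  split_ifs with h <;> simp [h]

def cube (x : Fin n → Bool) (F : Set (Fin n)) : Set (Fin n → Bool) :=
  {z | delta x z ⊆ F}

lemma interval_eq_cube (x y : Fin n → Bool) : interval x y = cube x (delta x y) := rfl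

lemma mem_cube {x z : Fin n → Bool} {F : Set (Fin n)} : z ∈ cube x F ↔ ∀ i ∉ F, z i = x i :=
  ⟨fun h _ hi => by_contra fun hne => hi (h (Ne.symm hne)),
    fun h i hi => by_contra fun hiF => hi (h i hiF).symm⟩

lemma cube_mono {x : Fin n → Bool} {F G : Set (Fin n)} (h : F ⊆ G) : cube x F ⊆ cube x G :=
  fun _ hz => hz.trans h

lemma cube_eq_of_mem {x y : Fin n → Bool} {F : Set (Fin n)} (hy : y ∈ cube x F) :
    cube y F = cube x F := by
  ext z
  exact ⟨fun hz => (delta_subset_union x y z).trans (Set.union_subset hy hz),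
    fun hz => (delta_subset_union y x z).trans
      (Set.union_subset (delta_comm y x ▸ hy) hz)⟩

lemma isSubcube_cube (x : Fin n → Bool) (F : Set (Fin n)) : IsSubcube (cube x F) := by
  refine ⟨{i | i ∉ F ∧ x i = false}, {i | i ∉ F ∧ x i = true},
    Set.disjoint_left.2 fun i h₀ h₁ => by simp_all, ?_⟩
  ext z
  rw [mem_cube]
  constructor
  · exact fun hz => ⟨fun i hi => (hz i hi.1).trans hi.2, fun i hi => (hz i hi.1).trans hi.2⟩
  · rintro ⟨h₀, h₁⟩ i hi
    cases hx : x i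
    exacts [h₀ i ⟨hi, hx⟩, h₁ i ⟨hi, hx⟩]

lemma mem_interval_self (x y : Fin n → Bool) : x ∈ interval x y :=
  fun _ hi => absurd rfl hi

lemma mem_interval_right (x y : Fin n → Bool) : y ∈ interval x y :=
  fun _ hi => hi

lemma update_mem_interval (x y : Fin n → Bool) (i : Fin n) : update x i (y i) ∈ interval x y := by
  intro k hk
  by_cases hki : k = i
  · subst hki; simpa [delta] using hk
  · simp [delta, update_of_ne hki] at hk

lemma eq_interval_opp {X : Set (Fin n → Bool)} (hX : IsSubcube X) {x : Fin n → Bool}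
    (hx : x ∈ X) : X = interval x (opp X x) := by
  ext z
  refine ⟨fun hz i hi => delta_opp.2 ⟨z, hz, Ne.symm hi⟩, fun hz => ?_⟩
  have hfix : ∀ i, (∀ y ∈ X, y i = x i) → z i = x i := fun i hi => by_contra fun hzi => by
    obtain ⟨y, hy, hyi⟩ := delta_opp.1 (hz (Ne.symm hzi))
    exact hyi (hi y hy)
  obtain ⟨S, T, -, rfl⟩ := hX
  exact ⟨fun i hi => (hfix i fun y hy => (hy.1 i hi).trans (hx.1 i hi).symm).trans (hx.1 i hi),
    fun i hi => (hfix i fun y hy => (hy.2 i hi).trans (hx.2 i hi).symm).trans (hx.2 i hi)⟩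

lemma opp_mem {X : Set (Fin n → Bool)} (hX : IsSubcube X) {x : Fin n → Bool} (hx : x ∈ X) :
    opp X x ∈ X := by
  have h := mem_interval_right x (opp X x)
  rwa [← eq_interval_opp hX hx] at h

lemma interval_subset_of_isSubcube {X : Set (Fin n → Bool)} (hX : IsSubcube X)
    {x y : Fin n → Bool} (hx : x ∈ X) (hy : y ∈ X) : interval x y ⊆ X := by
  have hXeq := eq_interval_opp hX hx
  rw [hXeq] at hy ⊢
  exact fun z hz => Set.Subset.trans hz hy

lemma upd_singleton (f : (Fin n → Bool) → Fin n → Bool) (i : Fin n) (x : Fin n → Bool) :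
    upd f {i} x = update x i (f x i) := by
  funext k
  by_cases hk : k = i <;> simp [upd, hk]

lemma upd_insert (f : (Fin n → Bool) → Fin n → Bool) (a : Fin n) (s : Finset (Fin n))
    (x : Fin n → Bool) : upd f (insert a s) x = update (upd f s x) a (f x a) := by
  funext k
  by_cases hk : k = a <;> simp [upd, hk]

section Commutative

variable {f : (Fin n → Bool) → Fin n → Bool}

lemma isCommutative'_iff :
    IsCommutative' f ↔ ∀ x i j, i ≠ j → f (update x i (f x i)) j = f x j := by
  constructor
  · intro hf x i j hij
    simpa [upd2, upd_singleton, update_of_ne hij.symm] using congrFun (congrFun (hf i j) x) j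
  · intro hf i j
    rcases eq_or_ne i j with rfl | hij
    · rfl
    funext x
    simp only [upd2, comp_apply, upd_singleton]
    rw [hf x i j hij, hf x j i hij.symm, update_comm hij.symm]

lemma apply_upd_of_notMem (hf : IsCommutative' f) (x : Fin n → Bool) {K : Finset (Fin n)}
    {i : Fin n} (hi : i ∉ K) : f (upd f K x) i = f x i := by
  induction K using Finset.induction_on generalizing i with
  | empty => rw [show upd f ∅ x = x from funext fun k => if_neg (Finset.notMem_empty k)]
  | insert a s ha ih =>
    rw [Finset.mem_insert, not_or] at hi
    rw [upd_insert, ← ih ha, isCommutative'_iff.1 hf _ _ _ (Ne.symm hi.1), ih hi.2]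

lemma apply_upd_of_mem (hf : IsCommutative' f) (x : Fin n → Bool) {K : Finset (Fin n)}
    {i : Fin n} (hi : i ∈ K) : f (upd f K x) i = f (update x i (f x i)) i := by
  have hK : upd f K x = upd f (K.erase i) (update x i (f x i)) := by
    funext k
    rcases eq_or_ne k i with rfl | hki
    · simp [upd, hi]
    · by_cases hkK : k ∈ K
      · simp [upd, hki, hkK, isCommutative'_iff.1 hf x i k hki.symm]
      · simp [upd, hki, hkK]
  rw [hK, apply_upd_of_notMem hf _ (K.notMem_erase i)]

lemma eq_upd_of_mem_interval {x z : Fin n → Bool} (hz : z ∈ interval x (f x)) :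
    z = upd f (Finset.univ.filter fun i => x i ≠ z i) x := by
  funext k
  by_cases hk : x k = z k
  · simp [upd, hk]
  · simpa [upd, hk] using Bool.eq_of_ne_of_ne (Ne.symm hk) (Ne.symm (hz hk))

lemma apply_eq_of_mem_interval (hf : IsCommutative' f) {x z w : Fin n → Bool}
    (hz : z ∈ interval x (f x)) (hw : w ∈ interval x (f x)) {i : Fin n} (h : z i = w i) :
    f z i = f w i := by
  rw [eq_upd_of_mem_interval hz, eq_upd_of_mem_interval hw]
  by_cases hi : x i = z i
  · rw [apply_upd_of_notMem hf, apply_upd_of_notMem hf] <;> simp [hi, h]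
  · rw [apply_upd_of_mem hf, apply_upd_of_mem hf] <;> simp [hi, ← h]

lemma tprin_eq_interval (hf : IsCommutative' f) (x : Fin n → Bool) :
    Tprin f x = interval x (f x) := by
  refine Set.Subset.antisymm (Set.sInter_subset_of_mem ⟨⟨isSubcube_cube _ _, ?_⟩,
    mem_interval_self _ _⟩) (Set.subset_sInter fun X ⟨hX, hxX⟩ =>
      interval_subset_of_isSubcube hX.1 hxX (hX.2 x hxX))
  intro z hz i hi
  by_cases hzi : x i = z i
  · rwa [delta, Set.mem_ofPred_eq,
      apply_eq_of_mem_interval hf hz (mem_interval_self x _) hzi.symm] at hi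
  · exact hz hzi

end Commutative

def SubcubeConvex (𝒜 : Set (Set (Fin n → Bool))) : Prop :=
  ∀ Q ∈ 𝒜, ∀ R ∈ 𝒜, ∀ S : Set (Fin n → Bool), IsSubcube S → Q ⊆ S → S ⊆ R → S ∈ 𝒜

theorem subcubeConvex_PT {f : (Fin n → Bool) → Fin n → Bool} (hf : IsCommutative' f) :
    SubcubeConvex (PT f) := by
  classical
  rintro _ ⟨p, rfl⟩ _ ⟨q, rfl⟩ S hS hpS hSq
  rw [tprin_eq_interval hf] at hpS hSq
  set F := delta p (opp S p)
  have hSF : S = cube p F := eq_interval_opp hS (hpS (mem_interval_self p _))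
  have hp : p ∈ interval q (f q) := hSq (hpS (mem_interval_self _ _))
  have hDp : delta p (f p) ⊆ F := by
    have h := hpS (mem_interval_right p (f p))
    rwa [hSF] at h
  have hFq : F ⊆ delta q (f q) := by
    intro i hi
    have hs : opp S p ∈ interval q (f q) := hSq (opp_mem hS (hpS (mem_interval_self p _)))
    by_cases hqi : q i = p i
    · exact hs (show q i ≠ opp S p i from hqi ▸ hi)
    · exact hp hqi
  -- By `apply_eq_of_mem_interval`, `z` is unstable exactly on `F`.
  let z : Fin n → Bool := fun i => if i ∈ F then q i else p i
  have hzS : z ∈ cube p F := mem_cube.2 fun i hi => if_neg hi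
  have hzq : z ∈ interval q (f q) := by
    intro i hi
    by_cases hiF : i ∈ F
    · exact hFq hiF
    · have hzi : z i = p i := if_neg hiF
      exact hp (show q i ≠ p i by rw [← hzi]; exact hi)
  have hDz : delta z (f z) = F := by
    ext i
    by_cases hiF : i ∈ F
    · have hzi : z i = q i := if_pos hiF
      simpa [delta, hzi, apply_eq_of_mem_interval hf hzq (mem_interval_self q _) hzi, hiF]
        using hFq hiF
    · have hzi : z i = p i := if_neg hiF
      have hpi : p i = f p i := by_contra fun h => hiF (hDp h)
      simp [delta, hzi, apply_eq_of_mem_interval hf hzq hp hzi, ← hpi, hiF]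
  refine ⟨z, ?_⟩
  rw [tprin_eq_interval hf, interval_eq_cube, hDz, cube_eq_of_mem hzS, hSF]

section PrePrincipal

variable {𝒬 : Set (Set (Fin n → Bool))}

lemma mem_collAt_self (𝒬 : Set (Set (Fin n → Bool))) (x : Fin n → Bool) : x ∈ collAt 𝒬 x :=
  Set.mem_sInter.2 fun _ hA => hA.2

lemma collAt_subset {A : Set (Fin n → Bool)} {x : Fin n → Bool} (hA : A ∈ 𝒬) (hx : x ∈ A) :
    collAt 𝒬 x ⊆ A :=
  Set.sInter_subset_of_mem ⟨hA, hx⟩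

lemma PrePrincipal.collAt_mem (hpp : PrePrincipal 𝒬) (x : Fin n → Bool) : collAt 𝒬 x ∈ 𝒬 :=
  (Set.ext_iff.1 hpp _).2 ⟨x, rfl⟩

lemma collAt_eq_interval (h𝒬 : ∀ A ∈ 𝒬, IsSubcube A) (hpp : PrePrincipal 𝒬)
    (x : Fin n → Bool) : collAt 𝒬 x = interval x (Fnet 𝒬 x) :=
  eq_interval_opp (h𝒬 _ (hpp.collAt_mem x)) (mem_collAt_self 𝒬 x)

lemma fnet_apply_update (h𝒬 : ∀ A ∈ 𝒬, IsSubcube A) (hpp : PrePrincipal 𝒬)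
    (hconv : SubcubeConvex 𝒬) (x : Fin n → Bool) {i j : Fin n} (hij : i ≠ j) :
    Fnet 𝒬 (update x i (Fnet 𝒬 x i)) j = Fnet 𝒬 x j := by
  set g := Fnet 𝒬
  set y := update x i (g x i) with hy
  have hC := collAt_eq_interval h𝒬 hpp
  have hyj : y j = x j := update_of_ne hij.symm _ _
  have hyC : y ∈ collAt 𝒬 x := by rw [hC]; exact update_mem_interval x (g x) i
  have hyx : interval y (g y) ⊆ interval x (g x) := by
    rw [← hC, ← hC]; exact collAt_subset (hpp.collAt_mem x) hyC
  refine Bool.eq_of_ne_iff_ne (c := x j) ⟨fun hxj => hyx (mem_interval_right y (g y)) hxj,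
    fun hxj => ?_⟩
  by_cases hi : x i = g x i
  · rwa [show y = x by rw [hy, ← hi, update_eq_self]]
  -- `B ∈ 𝒬` by convexity, so `B ⊇ 𝒬(x) ∋ g x`, which makes `j` free in `𝒬(y)`.
  let B := cube y (insert i (delta y (g y)))
  have hB : B ∈ 𝒬 := by
    refine hconv _ (hpp.collAt_mem y) _ (hpp.collAt_mem x) B (isSubcube_cube _ _) ?_ ?_
    · rw [hC]; exact cube_mono (Set.subset_insert _ _)
    rw [hC]
    intro z hz k hk
    rcases eq_or_ne k i with rfl | hki
    · exact hi
    have hxk : x k = y k := (update_of_ne hki _ _).symm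
    rcases hz (show y k ≠ z k from hxk ▸ hk) with rfl | hk'
    · exact absurd rfl hki
    · exact hyx (mem_interval_right y (g y)) (show x k ≠ g y k from hxk ▸ hk')
  have hxB : x ∈ B := by
    intro k hk
    by_contra hk'
    exact hk (update_of_ne (fun h => hk' (Or.inl h)) _ _)
  have hgx : g x ∈ B := collAt_subset hB hxB (by rw [hC]; exact mem_interval_right x (g x))
  rcases hgx (show y j ≠ g x j from hyj ▸ hxj) with rfl | hj
  · exact absurd rfl hij
  · exact hyj ▸ hj

lemma isCommutative'_fnet (h𝒬 : ∀ A ∈ 𝒬, IsSubcube A) (hpp : PrePrincipal 𝒬)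
    (hconv : SubcubeConvex 𝒬) : IsCommutative' (Fnet 𝒬) :=
  isCommutative'_iff.2 fun x _ _ hij => fnet_apply_update h𝒬 hpp hconv x hij

lemma PT_fnet (h𝒬 : ∀ A ∈ 𝒬, IsSubcube A) (hpp : PrePrincipal 𝒬) (hconv : SubcubeConvex 𝒬) :
    PT (Fnet 𝒬) = 𝒬 := by
  have hT : Tprin (Fnet 𝒬) = collAt 𝒬 := funext fun x =>
    (tprin_eq_interval (isCommutative'_fnet h𝒬 hpp hconv) x).trans
      (collAt_eq_interval h𝒬 hpp x).symm
  rw [PT, hT]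
  exact hpp.symm

end PrePrincipal

end

/-- a pre-principal collection of subcubes is the collection of
principal trapspaces of some commutative network iff it is convex. -/
theorem stmt13 (n : ℕ) (𝒬 : Set (Set (Fin n → Bool)))
    (h𝒬 : ∀ A ∈ 𝒬, IsSubcube A) (hpp : PrePrincipal 𝒬) :
    (∃ f : (Fin n → Bool) → Fin n → Bool, IsCommutative' f ∧ PT f = 𝒬) ↔
      (∀ Q ∈ 𝒬, ∀ R ∈ 𝒬, ∀ S : Set (Fin n → Bool),
        IsSubcube S → Q ⊆ S → S ⊆ R → S ∈ 𝒬) := by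
  constructor
  · rintro ⟨f, hf, rfl⟩
    exact subcubeConvex_PT hf
  · intro hconv
    exact ⟨Fnet 𝒬, isCommutative'_fnet h𝒬 hpp hconv, PT_fnet h𝒬 hpp hconv⟩
end

section
/- For every Boolean network f of dimension n, the following are equivalent: (1) f is Marseille, i.e. f is commutative and bijective; (2) for all x ∈ 𝔹^n and all y ∈ [x, f(x)], [y, f(y)] = [x, f(x)]; (3) f^{(S,T)} = f^{(S Δ T)} for all S, T ⊆ [n]. -/
/-
Condition (2) says exactly that `Δ(y, f y) = Δ(x, f x)` for every `y ∈ [x, f x]`. For a commutative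
network, `f^{(i)}` leaves `f x j` unchanged for `j ≠ i`, and injectivity forbids `f^{(i)}(x)` from
fixing coordinate `i` when `x` does not; so flipping one coordinate of `Δ(x, f x)` preserves
`Δ(x, f x)`, and every point of `[x, f x]` is reached by such flips. Once `Δ` is constant on
`[x, f x]`, updating `S` and then `T` flips exactly the coordinates of `(S ∆ T) ∩ Δ(x, f x)`, which
is (3). Conversely (3) gives commutativity from `S ∆ T = T ∆ S`, and `f ∘ f = f^{(∅)} = id`.
-/

section BooleanNetwork

variable {n : ℕ}

lemma notMem_delta_iff {x y : Fin n → Bool} {i : Fin n} : i ∉ delta x y ↔ x i = y i := by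
  simp [delta]

lemma delta_subset_iff_of_delta_subset {D : Set (Fin n)} {x y : Fin n → Bool}
    (hxy : delta x y ⊆ D) (z : Fin n → Bool) : delta y z ⊆ D ↔ delta x z ⊆ D := by
  have hD : ∀ i ∉ D, x i = y i := fun i hi => notMem_delta_iff.1 (fun h => hi (hxy h))
  constructor <;> intro h i hi <;> by_contra hiD <;> apply hiD <;> apply h
  · simpa [delta, hD i hiD] using hi
  · simpa [delta, ← hD i hiD] using hi

@[simp]
lemma delta_self (x : Fin n → Bool) : delta x x = ∅ := by
  simp [delta]

lemma delta_update_not (x : Fin n → Bool) (i : Fin n) :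
    delta x (Function.update x i (!x i)) = {i} := by
  ext j
  by_cases hj : j = i
  · subst hj; simp [delta]
  · simp [delta, hj]

lemma delta_update_not_of_mem {x y : Fin n → Bool} {i : Fin n} (hi : i ∈ delta x y) :
    delta (Function.update x i (!x i)) y ⊆ delta x y := by
  intro j hj
  by_cases hji : j = i
  · exact hji ▸ hi
  · simpa [delta, hji] using hj

lemma delta_eq_of_mem_interval {x w y : Fin n → Bool} (hy : y ∈ interval x w) :
    delta x w = {i | ∃ z ∈ interval x w, y i ≠ z i} := by
  ext i
  constructor
  · intro hi
    refine ⟨Function.update y i (!y i), ?_, by simp⟩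
    refine (delta_subset_iff_of_delta_subset hy _).1 ?_
    simpa [delta_update_not] using hi
  · rintro ⟨z, hz, hyz⟩
    by_contra hi
    have hxy : x i = y i := notMem_delta_iff.1 (fun h => hi (hy h))
    have hxz : x i = z i := notMem_delta_iff.1 (fun h => hi (hz h))
    exact hyz (hxy ▸ hxz)

lemma interval_eq_iff_delta_eq {x w y w' : Fin n → Bool} (hy : y ∈ interval x w) :
    interval y w' = interval x w ↔ delta y w' = delta x w := by
  constructor
  · intro h
    rw [delta_eq_of_mem_interval hy, delta_eq_of_mem_interval (y := y) (by simp [interval]), h]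
  · intro h
    ext z
    change delta y z ⊆ delta y w' ↔ delta x z ⊆ delta x w
    rw [h]
    exact delta_subset_iff_of_delta_subset hy z

@[simp]
lemma upd_univ (f : (Fin n → Bool) → Fin n → Bool) : upd f Finset.univ = f := by
  funext x i; simp [upd]

@[simp]
lemma upd_empty (f : (Fin n → Bool) → Fin n → Bool) : upd f ∅ = id := by
  funext x i; simp [upd]

lemma upd_mem_interval (f : (Fin n → Bool) → Fin n → Bool) (S : Finset (Fin n))
    (x : Fin n → Bool) : upd f S x ∈ interval x (f x) := by
  intro i hi
  by_cases hiS : i ∈ S <;> simp_all [delta, upd]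

lemma upd_singleton_of_mem_delta {f : (Fin n → Bool) → Fin n → Bool} {x : Fin n → Bool}
    {i : Fin n} (hi : i ∈ delta x (f x)) : upd f {i} x = Function.update x i (!x i) := by
  have hfx : f x i = !x i := by simpa [delta, eq_comm, Bool.eq_not_iff] using hi
  funext j
  by_cases hj : j = i
  · subst hj; simp [upd, hfx]
  · simp [upd, hj]

lemma apply_upd_singleton_of_ne {f : (Fin n → Bool) → Fin n → Bool} (hc : IsCommutative' f)
    (x : Fin n → Bool) {i j : Fin n} (hji : j ≠ i) : f (upd f {i} x) j = f x j := by
  simpa [upd2, upd, hji] using congrFun (congrFun (hc i j) x) j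

lemma delta_update_of_mem_delta {f : (Fin n → Bool) → Fin n → Bool} (hc : IsCommutative' f)
    (hinj : Function.Injective f) {x : Fin n → Bool} {i : Fin n} (hi : i ∈ delta x (f x)) :
    delta (Function.update x i (!x i)) (f (Function.update x i (!x i))) = delta x (f x) := by
  rw [← upd_singleton_of_mem_delta hi]
  have hoff : ∀ j ≠ i, f (upd f {i} x) j = f x j := fun j hj => apply_upd_singleton_of_ne hc x hj
  have hat : upd f {i} x i ≠ f (upd f {i} x) i := by
    intro h
    have hfix : f (upd f {i} x) = f x := by
      funext j
      by_cases hj : j = i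
      · subst hj; simpa [upd] using h.symm
      · exact hoff j hj
    have := congrFun (hinj hfix) i
    simp [upd_singleton_of_mem_delta hi] at this
  ext j
  by_cases hj : j = i
  · subst hj; exact iff_of_true hat hi
  · simp [delta, upd, hj, hoff j hj]

lemma delta_apply_eq_of_mem_interval {f : (Fin n → Bool) → Fin n → Bool}
    (hc : IsCommutative' f) (hinj : Function.Injective f) {x y : Fin n → Bool}
    (hy : y ∈ interval x (f x)) : delta y (f y) = delta x (f x) := by
  obtain ⟨A, hA⟩ := (Set.toFinite (delta x y)).exists_finset_coe
  suffices key : ∀ x, delta x y ⊆ A → ↑A ⊆ delta x (f x) → delta y (f y) = delta x (f x) from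
    key x hA.ge (hA ▸ hy)
  clear hA hy x
  induction A using Finset.induction_on with
  | empty =>
    intro x hxy _
    have : x = y := funext fun i => notMem_delta_iff.1 fun h => by simpa using hxy h
    rw [this]
  | @insert a s _ ih =>
    intro x hxy hA
    have haD : a ∈ delta x (f x) := hA (Finset.mem_insert_self a s)
    by_cases hay : a ∈ delta x y
    · rw [← delta_update_of_mem_delta hc hinj haD] at hA ⊢
      refine ih _ (fun j hj => ?_) (fun j hj => hA (Finset.mem_insert_of_mem hj))
      have hja : j ≠ a := by rintro rfl; simp_all [delta]
      simpa [hja] using hxy (delta_update_not_of_mem hay hj)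
    · refine ih x (fun j hj => ?_) (fun j hj => hA (Finset.mem_insert_of_mem hj))
      have hja : j ≠ a := by rintro rfl; exact hay hj
      simpa [hja] using hxy hj

lemma apply_eq_xor_of_delta_eq {x u y v : Fin n → Bool} (h : delta y v = delta x u) (i : Fin n) :
    v i = xor (y i) (xor (x i) (u i)) := by
  have hi : y i ≠ v i ↔ x i ≠ u i := Set.ext_iff.1 h i
  revert hi
  cases x i <;> cases u i <;> cases y i <;> cases v i <;> simp

lemma upd2_eq_upd_symmDiff {f : (Fin n → Bool) → Fin n → Bool}
    (h : ∀ x, ∀ y ∈ interval x (f x), delta y (f y) = delta x (f x)) (S T : Finset (Fin n)) :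
    upd2 f S T = upd f (symmDiff S T) := by
  funext x i
  have hfy := apply_eq_xor_of_delta_eq (h x _ (upd_mem_interval f S x)) i
  simp only [upd2, Function.comp_apply, upd, Finset.mem_symmDiff] at hfy ⊢
  rw [hfy]
  by_cases hS : i ∈ S <;> by_cases hT : i ∈ T <;> simp only [hS, hT, if_true, if_false] <;>
    cases x i <;> cases f x i <;> rfl

end BooleanNetwork

/-- alternate definitions of Marseille networks. -/
theorem stmt14 (n : ℕ) (f : (Fin n → Bool) → Fin n → Bool) :
    List.TFAE [
      IsCommutative' f ∧ Function.Bijective f,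
      ∀ x : Fin n → Bool, ∀ y ∈ interval x (f x), interval y (f y) = interval x (f x),
      ∀ S T : Finset (Fin n), upd2 f S T = upd f (symmDiff S T)
    ] := by
  tfae_have 1 → 2 := fun ⟨hc, hbij⟩ x y hy =>
    (interval_eq_iff_delta_eq hy).2 (delta_apply_eq_of_mem_interval hc hbij.injective hy)
  tfae_have 2 → 3 := fun h =>
    upd2_eq_upd_symmDiff fun x y hy => (interval_eq_iff_delta_eq hy).1 (h x y hy)
  tfae_have 3 → 1 := by
    intro h
    have hff : f ∘ f = id := by simpa [upd2] using h Finset.univ Finset.univ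
    exact ⟨fun i j => by rw [h, h, symmDiff_comm], Function.Involutive.bijective (congrFun hff)⟩
  tfae_finish
end
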